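/- arXiv:2507.05526 — 3 statements merged into one kernel-verified Lean document; each statement's English description precedes it below -/
import Mathlib

section
/- For any ν > 0 and real numbers A, B, C with C·A² > B², the integral over ℝ of dx/(A²x² − 2Bx + C)^((ν+1)/2) equals √π · Γ(ν/2)/Γ((ν+1)/2) · (A²)^((ν−1)/2)/(C·A² − B²)^(ν/2). -/
/-!
Completing the square, `a x² - 2 b x + c = (D / a) (1 + ((a x - b) / √D)²)` with `D = a c - b²`,
and an affine change of variables reduce the integral to `∫ (1 + x²)^(-s)`. That one is computed
by writing `Γ(s) (1 + x²)^(-s) = ∫₀^∞ t^(s-1) e^(-(1 + x²) t) dt` and swapping the integrals: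
the inner integral over `x` is Gaussian, `√(π / t) e^(-t)`, and the outer one is `√π Γ(s - 1/2)`.
-/

open Real MeasureTheory Set

theorem integrable_one_add_sq_rpow_neg {s : ℝ} (hs : 1 / 2 < s) :
    Integrable fun x : ℝ => (1 + x ^ 2) ^ (-s) := by
  have h := integrable_rpow_neg_one_add_norm_sq (E := ℝ) (μ := volume) (r := 2 * s)
    (by simp only [Module.finrank_self, Nat.cast_one]; linarith)
  simpa [Real.norm_eq_abs, sq_abs, neg_div, mul_div_assoc, mul_div_cancel_left₀] using h

theorem integral_comp_mul_sub {E : Type*} [NormedAddCommGroup E] [NormedSpace ℝ E]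
    (g : ℝ → E) (k c : ℝ) : ∫ x : ℝ, g (k * x - c) = |k⁻¹| • ∫ y : ℝ, g y := by
  rw [Measure.integral_comp_mul_left (fun y => g (y - c)), integral_sub_right_eq_self]

theorem integral_one_add_sq_rpow_neg {s : ℝ} (hs : 1 / 2 < s) :
    ∫ x : ℝ, (1 + x ^ 2) ^ (-s) = √π * (Gamma (s - 1 / 2) / Gamma s) := by
  have hs0 : 0 < s := by linarith
  set f : ℝ → ℝ → ℝ := fun x t => t ^ (s - 1) * exp (-((1 + x ^ 2) * t)) with hf
  have integral_dt : ∀ x, ∫ t in Ioi 0, f x t = (1 + x ^ 2) ^ (-s) * Gamma s := fun x => by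
    rw [integral_rpow_mul_exp_neg_mul_Ioi hs0 (by positivity), one_div,
      inv_rpow (by positivity), rpow_neg (by positivity)]
  have integral_dx : ∀ t ∈ Ioi (0 : ℝ), ∫ x, f x t = √π * (exp (-t) * t ^ (s - 1 / 2 - 1)) := by
    intro t (ht : 0 < t)
    have hsplit : ∀ x, f x t = t ^ (s - 1) * exp (-t) * exp (-t * x ^ 2) := fun x => by
      rw [hf, mul_assoc, ← exp_add]; ring_nf
    have hsqrt : √(π / t) = √π * t ^ (-(1 / 2) : ℝ) := by
      rw [sqrt_div' _ ht.le, sqrt_eq_rpow t, div_eq_mul_inv, ← rpow_neg ht.le]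
    simp_rw [hsplit, integral_const_mul, integral_gaussian, hsqrt]
    rw [show s - 1 / 2 - 1 = (s - 1) + -(1 / 2) by ring, rpow_add ht]
    ring
  have f_integrable : Integrable (Function.uncurry f) (volume.prod (volume.restrict (Ioi 0))) := by
    refine (integrable_prod_iff (by rw [hf]; fun_prop)).2 ⟨.of_forall fun x => ?_, ?_⟩
    · refine Integrable.of_integral_ne_zero ?_
      simp only [Function.uncurry_apply_pair, integral_dt]
      have := Gamma_pos_of_pos hs0
      positivity
    · have norm_eq : ∀ x, ∫ t in Ioi 0, ‖f x t‖ = ∫ t in Ioi 0, f x t := fun x =>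
        setIntegral_congr_fun measurableSet_Ioi fun t (ht : 0 < t) =>
          norm_of_nonneg (by have := rpow_nonneg ht.le (s - 1); positivity)
      simp only [Function.uncurry_apply_pair, norm_eq, integral_dt]
      exact (integrable_one_add_sq_rpow_neg hs).mul_const _
  have swap := integral_integral_swap f_integrable
  rw [integral_congr_ae (.of_forall integral_dt),
    setIntegral_congr_fun measurableSet_Ioi integral_dx, integral_mul_const,
    integral_const_mul, ← Gamma_eq_integral (by linarith)] at swap
  rw [← mul_div_assoc, eq_div_iff (Gamma_pos_of_pos hs0).ne', swap]

theorem quadratic_eq_mul_one_add_sq {a b c : ℝ} (ha : 0 < a) (hD : 0 < a * c - b ^ 2) (x : ℝ) :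
    a * x ^ 2 - 2 * b * x + c =
      (a * c - b ^ 2) / a * (1 + (a / √(a * c - b ^ 2) * x - b / √(a * c - b ^ 2)) ^ 2) := by
  field_simp
  rw [sq_sqrt hD.le]
  ring

theorem integral_quadratic_rpow_neg {a b c s : ℝ} (ha : 0 < a) (hD : b ^ 2 < a * c)
    (hs : 1 / 2 < s) :
    ∫ x : ℝ, (a * x ^ 2 - 2 * b * x + c) ^ (-s) =
      √π * (Gamma (s - 1 / 2) / Gamma s) * (a ^ (s - 1) / (a * c - b ^ 2) ^ (s - 1 / 2)) := by
  have hD0 : 0 < a * c - b ^ 2 := by linarith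
  set D := a * c - b ^ 2
  have hsplit : ∀ x, (a * x ^ 2 - 2 * b * x + c) ^ (-s) =
      (D / a) ^ (-s) * (1 + (a / √D * x - b / √D) ^ 2) ^ (-s) := fun x => by
    rw [quadratic_eq_mul_one_add_sq ha hD0, mul_rpow (div_pos hD0 ha).le (by positivity)]
  simp_rw [hsplit]
  rw [integral_const_mul, integral_comp_mul_sub (fun y => (1 + y ^ 2) ^ (-s)),
    integral_one_add_sq_rpow_neg hs, smul_eq_mul, inv_div,
    abs_of_pos (div_pos (sqrt_pos.2 hD0) ha), sqrt_eq_rpow, rpow_neg (div_pos hD0 ha).le,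
    div_rpow hD0.le ha.le, rpow_sub_one ha.ne', rpow_sub hD0]
  field_simp

/-- Gamma-integral lemma. -/
theorem stmt_0 (ν A B C : ℝ) (hν : 0 < ν) (hA : A ≠ 0) (h : B ^ 2 < C * A ^ 2) :
    (∫ x : ℝ, (A ^ 2 * x ^ 2 - 2 * B * x + C) ^ (-((ν + 1) / 2))) =
      Real.sqrt Real.pi * (Real.Gamma (ν / 2) / Real.Gamma ((ν + 1) / 2)) *
        ((A ^ 2) ^ ((ν - 1) / 2) / (C * A ^ 2 - B ^ 2) ^ (ν / 2)) := by
  rw [mul_comm C, integral_quadratic_rpow_neg (by positivity) (by linarith) (by linarith)]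
  ring_nf
end

section
/- In the identifiable two-node linear Gaussian BCM, the posterior interventional distribution p(X₁ = y | do(X₂ = x), D) equals the two-component Gaussian mixture p(G₁|D)·N(y | μ(x), s²(x)) + (1 − p(G₁|D))·N(y | 0, σ²), where μ(x) = σ_w² S₁₂ x/(σ_w² S₂ + σ²) and s²(x) = σ²(1 + σ_w² x²/(σ_w² S₂ + σ²)). -/
/-!
Under G₁ the Gaussian prior on the weight is conjugate to the regression likelihood of X₁ on X₂,
so prior × likelihood is a constant multiple of the Gaussian posterior density
N(σw² S₁₂ / (σw² S₂ + σ²), σw² σ² / (σw² S₂ + σ²)), and integrating identifies the constant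
with the marginal likelihood L₁. The interventional density under G₁ is then a Gaussian
integral of N(y | w x, σ²) against that posterior, computed by the factorisation
N(y | w x, s) N(w | m, v) = N(y | m x, s + x² v) N(w | m', v') (marginal of y times posterior
of w). Under G₂ and G₃ the intervention leaves X₁ ~ N(0, σ²), so only the weights L₂, L₃ enter.
-/

open Real MeasureTheory

/-- Gaussian density with mean `m` and variance `v`. -/
noncomputable def gpdf (m v x : ℝ) : ℝ :=
  (Real.sqrt (2 * Real.pi * v))⁻¹ * Real.exp (-(x - m) ^ 2 / (2 * v))

open ProbabilityTheory

lemma gpdf_eq_gaussianPDFReal (m : ℝ) {v : ℝ} (hv : 0 ≤ v) :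
    gpdf m v = gaussianPDFReal m v.toNNReal := by
  ext x
  simp [gpdf, gaussianPDFReal, Real.coe_toNNReal _ hv]

lemma gpdf_nonneg (m v x : ℝ) : 0 ≤ gpdf m v x := by
  unfold gpdf; positivity

lemma gpdf_pos (m x : ℝ) {v : ℝ} (hv : 0 < v) : 0 < gpdf m v x := by
  rw [gpdf_eq_gaussianPDFReal m hv.le]
  exact gaussianPDFReal_pos _ _ _ (by simpa using hv)

lemma integral_gpdf (m : ℝ) {v : ℝ} (hv : 0 < v) : ∫ x, gpdf m v x = 1 := by
  rw [gpdf_eq_gaussianPDFReal m hv.le]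
  exact integral_gaussianPDFReal_eq_one m (by simpa using hv)

lemma gpdf_eq_gpdf_zero_mul_exp (m v x : ℝ) :
    gpdf m v x = gpdf 0 v x * rexp ((2 * x * m - m ^ 2) / (2 * v)) := by
  unfold gpdf
  conv_rhs => rw [mul_assoc, ← exp_add]
  congr 2
  ring

lemma exp_neg_sq_div_add_mul_eq {v : ℝ} (hv : 0 < v) (b w : ℝ) :
    rexp (-w ^ 2 / (2 * v) + b * w) = √(2 * π * v) * rexp (v * b ^ 2 / 2) * gpdf (v * b) v w := by
  have hc : √(2 * π * v) ≠ 0 := by positivity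
  unfold gpdf
  rw [← mul_assoc, mul_assoc _ _ (√(2 * π * v))⁻¹, mul_comm (rexp _), ← mul_assoc,
    mul_inv_cancel₀ hc, one_mul, ← exp_add]
  congr 1
  field_simp
  ring

lemma gpdf_mul_gpdf {s v : ℝ} (hs : 0 < s) (hv : 0 < v) (m x y w : ℝ) :
    gpdf (w * x) s y * gpdf m v w =
      gpdf (m * x) (s + x ^ 2 * v) y *
        gpdf ((s * m + v * x * y) / (s + x ^ 2 * v)) (s * v / (s + x ^ 2 * v)) w := by
  have hd : 0 < s + x ^ 2 * v := by positivity
  unfold gpdf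
  rw [mul_mul_mul_comm, mul_mul_mul_comm _ (rexp _), ← exp_add, ← exp_add, ← mul_inv, ← mul_inv,
    ← sqrt_mul (by positivity), ← sqrt_mul (by positivity)]
  congr 2
  · field_simp
  · field_simp
    ring

lemma integral_gpdf_mul_gpdf {s v : ℝ} (hs : 0 < s) (hv : 0 < v) (m x y : ℝ) :
    ∫ w, gpdf (w * x) s y * gpdf m v w = gpdf (m * x) (s + x ^ 2 * v) y := by
  have hpost : 0 < s * v / (s + x ^ 2 * v) := by positivity
  simp_rw [gpdf_mul_gpdf hs hv, integral_const_mul, integral_gpdf _ hpost, mul_one]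

lemma prod_gpdf_mul_eq {ι : Type*} [Fintype ι] (u z : ι → ℝ) (s w : ℝ) :
    ∏ i, gpdf (w * u i) s (z i) = (∏ i, gpdf 0 s (z i)) *
      rexp ((2 * (∑ i, z i * u i) * w - (∑ i, u i ^ 2) * w ^ 2) / (2 * s)) := by
  simp_rw [gpdf_eq_gpdf_zero_mul_exp (w * u _), Finset.prod_mul_distrib, ← exp_sum,
    ← Finset.sum_div, Finset.sum_sub_distrib, Finset.mul_sum, Finset.sum_mul]
  congr 4 <;> refine Finset.sum_congr rfl fun i _ => by ring

lemma exists_gpdf_mul_prod_gpdf_eq {ι : Type*} [Fintype ι] (u z : ι → ℝ) {τ s : ℝ}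
    (hτ : 0 < τ) (hs : 0 < s) :
    ∃ Z, ∀ w, gpdf 0 τ w * ∏ i, gpdf (w * u i) s (z i) =
      Z * gpdf (τ * (∑ i, z i * u i) / (τ * ∑ i, u i ^ 2 + s))
        (τ * s / (τ * ∑ i, u i ^ 2 + s)) w := by
  set S := ∑ i, u i ^ 2
  set S' := ∑ i, z i * u i
  set V := τ * s / (τ * S + s)
  have hS : 0 ≤ S := by positivity
  have hV : 0 < V := by positivity
  have hmean : τ * S' / (τ * S + s) = V * (S' / s) := by simp only [V]; field_simp
  refine ⟨(∏ i, gpdf 0 s (z i)) * (√(2 * π * τ))⁻¹ * (√(2 * π * V) * rexp (V * (S' / s) ^ 2 / 2)),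
    fun w => ?_⟩
  have hexp : rexp (-w ^ 2 / (2 * τ)) * rexp ((2 * S' * w - S * w ^ 2) / (2 * s)) =
      rexp (-w ^ 2 / (2 * V) + S' / s * w) := by
    rw [← exp_add]
    congr 1
    simp only [V]
    field_simp
    ring
  rw [prod_gpdf_mul_eq, hmean, mul_assoc _ _ (gpdf _ _ _), ← exp_neg_sq_div_add_mul_eq hV, ← hexp]
  simp only [gpdf, sub_zero]
  ring

/-- posterior interventional distribution in the identifiable
two-node linear Gaussian BCM is a two-component Gaussian mixture. -/
theorem stmt_6 (n : ℕ) (X1 X2 : Fin n → ℝ) (σ σw : ℝ) (hσ : 0 < σ) (hσw : 0 < σw)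
    (x : ℝ) :
    let S2 := ∑ i, X2 i ^ 2
    let S12 := ∑ i, X1 i * X2 i
    -- marginal likelihoods of the three graphs
    let L1 := ∫ w : ℝ, gpdf 0 (σw ^ 2) w *
        ∏ i, gpdf (w * X2 i) (σ ^ 2) (X1 i) * gpdf 0 (σ ^ 2) (X2 i)
    let L2 := ∫ w : ℝ, gpdf 0 (σw ^ 2) w *
        ∏ i, gpdf (w * X1 i) (σ ^ 2) (X2 i) * gpdf 0 (σ ^ 2) (X1 i)
    let L3 := ∏ i, gpdf 0 (σ ^ 2) (X1 i) * gpdf 0 (σ ^ 2) (X2 i)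
    -- posterior probability of graph G₁ (uniform graph prior)
    let p1 := L1 / (L1 + L2 + L3)
    -- posterior interventional density of X₁ under do(X₂ = x)
    let postInt : ℝ → ℝ := fun y =>
      ((∫ w : ℝ, gpdf (w * x) (σ ^ 2) y * (gpdf 0 (σw ^ 2) w *
          ∏ i, gpdf (w * X2 i) (σ ^ 2) (X1 i) * gpdf 0 (σ ^ 2) (X2 i))) +
        (L2 + L3) * gpdf 0 (σ ^ 2) y) / (L1 + L2 + L3)
    let μx := σw ^ 2 * S12 * x / (σw ^ 2 * S2 + σ ^ 2)
    let s2x := σ ^ 2 * (1 + σw ^ 2 * x ^ 2 / (σw ^ 2 * S2 + σ ^ 2))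
    ∀ y : ℝ, postInt y = p1 * gpdf μx s2x y + (1 - p1) * gpdf 0 (σ ^ 2) y := by
  intro S2 S12 L1 L2 L3 p1 postInt μx s2x y
  have hσ2 : 0 < σ ^ 2 := by positivity
  set C := ∏ i, gpdf 0 (σ ^ 2) (X2 i)
  set V := σw ^ 2 * σ ^ 2 / (σw ^ 2 * S2 + σ ^ 2)
  have hV : 0 < V := by positivity
  obtain ⟨Z, hpost⟩ := exists_gpdf_mul_prod_gpdf_eq X2 X1 (pow_pos hσw 2) hσ2
  have hjoint : ∀ w, gpdf 0 (σw ^ 2) w *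
      ∏ i, gpdf (w * X2 i) (σ ^ 2) (X1 i) * gpdf 0 (σ ^ 2) (X2 i) =
      Z * C * gpdf (σw ^ 2 * S12 / (σw ^ 2 * S2 + σ ^ 2)) V w := by
    intro w
    rw [Finset.prod_mul_distrib, ← mul_assoc, hpost]
    ring
  have hL1 : L1 = Z * C := by
    simp only [L1, hjoint, integral_const_mul, integral_gpdf _ hV, mul_one]
  have hpredictive : ∫ w, gpdf (w * x) (σ ^ 2) y * (gpdf 0 (σw ^ 2) w *
      ∏ i, gpdf (w * X2 i) (σ ^ 2) (X1 i) * gpdf 0 (σ ^ 2) (X2 i)) = L1 * gpdf μx s2x y := by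
    simp_rw [hjoint, mul_left_comm _ (Z * C), integral_const_mul, integral_gpdf_mul_gpdf hσ2 hV,
      hL1]
    congr 2
    · exact div_mul_eq_mul_div _ _ _
    · ring
  have hevidence_nonneg : ∀ u z : Fin n → ℝ, 0 ≤ ∫ w, gpdf 0 (σw ^ 2) w *
      ∏ i, gpdf (w * u i) (σ ^ 2) (z i) * gpdf 0 (σ ^ 2) (u i) := fun u z =>
    integral_nonneg fun w => mul_nonneg (gpdf_nonneg _ _ _)
      (Finset.prod_nonneg fun i _ => mul_nonneg (gpdf_nonneg _ _ _) (gpdf_nonneg _ _ _))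
  have hL3 : 0 < L3 := Finset.prod_pos fun i _ => mul_pos (gpdf_pos _ _ hσ2) (gpdf_pos _ _ hσ2)
  have hT : L1 + L2 + L3 ≠ 0 := (add_pos_of_nonneg_of_pos
    (add_nonneg (hevidence_nonneg X2 X1) (hevidence_nonneg X1 X2)) hL3).ne'
  simp only [postInt, p1, hpredictive]
  field_simp
  ring
end

section
/- For the non-identifiable two-node model, the marginal likelihood under graph G₁ equals (2β)^{2α−1/2} Γ(α+(n−1)/2) Γ(α+n/2) / (√η πⁿ Γ(α) Γ(α−1/2)) · (S₂ + 1/η)^{(ν−1)/2} / ((S₂ + 2β)^{(ν−1)/2} · ((S₁ + 2β)(S₂ + 1/η) − S₁₂²)^{ν/2}), where ν = 2α + n. -/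
/-!
The integrand splits into a factor in `(w, τ₁)` and a factor in `τ₂`. A product of centred
Gaussian densities of common variance `τ` is `(2πτ)^(-n/2) exp (-S / (2τ))`, so against an
inverse-gamma density the `τ₂` factor integrates to an inverse-gamma normalising constant
`Γ(a) / c^a`, with shape `a = α - 1/2 + n/2` and scale `c = β + S₂/2`. In the `(w, τ₁)` factor,
completing the square in `w` turns the exponent into `-(A / (2τ₁)) (w - S₁₂/A)² - D / (2Aτ₁)`
with `A = S₂ + 1/η` and `D = (S₁ + 2β) A - S₁₂²`; after Fubini, the Gaussian integral over `w`
contributes `√(2πτ₁/A)` and the remaining `τ₁` integral is again inverse-gamma, now with shape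
`α + n/2` and scale `D / (2A)`.
-/

open Real MeasureTheory

/-- Inverse-gamma density with shape `a` and scale `b`. -/
noncomputable def invGammaPdf (a b t : ℝ) : ℝ :=
  b ^ a / Real.Gamma a * t ^ (-a - 1) * Real.exp (-b / t)

open Set Finset

theorem integral_rpow_neg_sub_one_mul_exp_neg_div {a c : ℝ} (ha : 0 < a) (hc : 0 < c) :
    ∫ t in Ioi (0 : ℝ), t ^ (-a - 1) * exp (-c / t) = Gamma a / c ^ a := by
  have hsubst : ∀ t ∈ Ioi (0 : ℝ), (|(-1 : ℝ)| * t ^ ((-1 : ℝ) - 1)) •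
      ((t ^ (-1 : ℝ)) ^ (a - 1) * exp (-(c * t ^ (-1 : ℝ)))) = t ^ (-a - 1) * exp (-c / t) := by
    intro t ht
    rw [smul_eq_mul, rpow_neg_one, inv_rpow (le_of_lt ht), abs_neg, abs_one, one_mul,
      ← rpow_neg (le_of_lt ht), ← mul_assoc, ← rpow_add ht]
    ring_nf
  rw [← setIntegral_congr_fun measurableSet_Ioi hsubst,
    integral_comp_rpow_Ioi (fun t => t ^ (a - 1) * exp (-(c * t))) (by norm_num),
    integral_rpow_mul_exp_neg_mul_Ioi ha hc, one_div, inv_rpow hc.le, inv_mul_eq_div]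

theorem integrableOn_rpow_neg_sub_one_mul_exp_neg_div {a c : ℝ} (ha : 0 < a) (hc : 0 < c) :
    IntegrableOn (fun t : ℝ => t ^ (-a - 1) * exp (-c / t)) (Ioi 0) :=
  Integrable.of_integral_ne_zero <| by
    rw [integral_rpow_neg_sub_one_mul_exp_neg_div ha hc]; positivity

theorem integral_exp_neg_mul_sub_sq (k m : ℝ) :
    ∫ w : ℝ, exp (-(k * (w - m) ^ 2)) = √(π / k) := by
  rw [integral_sub_right_eq_self (fun w => exp (-(k * w ^ 2))) m, ← integral_gaussian k]
  simp only [neg_mul]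

theorem gpdf_eq_rpow {v : ℝ} (hv : 0 ≤ v) (m x : ℝ) :
    gpdf m v x = (2 * π * v) ^ (-(1 : ℝ) / 2) * exp (-(x - m) ^ 2 / (2 * v)) := by
  rw [gpdf, sqrt_eq_rpow, ← rpow_neg (by positivity), ← neg_div]

theorem prod_gpdf {ι : Type*} [Fintype ι] (m x : ι → ℝ) {v : ℝ} (hv : 0 ≤ v) :
    ∏ i, gpdf (m i) v (x i) =
      (2 * π * v) ^ (-(Fintype.card ι : ℝ) / 2) *
        exp (-(∑ i, (x i - m i) ^ 2) / (2 * v)) := by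
  simp_rw [gpdf_eq_rpow hv, prod_mul_distrib, prod_const, ← exp_sum, card_univ,
    ← rpow_mul_natCast (by positivity : (0:ℝ) ≤ 2 * π * v), ← sum_div, sum_neg_distrib]
  congr 2
  ring

theorem sq_sum_mul_lt_sum_sq_add_mul_sum_sq_add {ι : Type*} (s : Finset ι) (x y : ι → ℝ)
    {a b : ℝ} (ha : 0 < a) (hb : 0 < b) :
    (∑ i ∈ s, x i * y i) ^ 2 < (∑ i ∈ s, x i ^ 2 + a) * (∑ i ∈ s, y i ^ 2 + b) := by
  have hx : 0 ≤ ∑ i ∈ s, x i ^ 2 := sum_nonneg fun i _ => sq_nonneg _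
  have hy : 0 ≤ ∑ i ∈ s, y i ^ 2 := sum_nonneg fun i _ => sq_nonneg _
  nlinarith [sum_mul_sq_le_sq_mul_sq s x y, mul_pos ha hb, mul_nonneg hx hb.le,
    mul_nonneg hy ha.le]

theorem integral_invGammaPdf_mul_prod_gpdf_zero {ι : Type*} [Fintype ι] {a b : ℝ}
    (ha : 0 < a) (hb : 0 < b) (x : ι → ℝ) :
    ∫ t in Ioi (0 : ℝ), invGammaPdf a b t * ∏ i, gpdf 0 t (x i) =
      Gamma (a + Fintype.card ι / 2) / Gamma a * (2 * b) ^ a /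
        (π ^ ((Fintype.card ι : ℝ) / 2) *
          (∑ i, x i ^ 2 + 2 * b) ^ (a + Fintype.card ι / 2)) := by
  set N : ℝ := (Fintype.card ι : ℝ)
  set S := ∑ i, x i ^ 2
  have hS : 0 ≤ S := sum_nonneg fun i _ => sq_nonneg _
  have hpt : ∀ t ∈ Ioi (0 : ℝ), invGammaPdf a b t * ∏ i, gpdf 0 t (x i) =
      b ^ a / Gamma a * (2 * π) ^ (-N / 2) *
        (t ^ (-(a + N / 2) - 1) * exp (-(b + S / 2) / t)) := by
    intro t (ht : 0 < t)
    have hpow : t ^ (-(a + N / 2) - 1) = t ^ (-a - 1) * t ^ (-N / 2) := by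
      rw [← rpow_add ht]; ring_nf
    have hexp : exp (-(b + S / 2) / t) = exp (-b / t) * exp (-S / (2 * t)) := by
      rw [← exp_add]; ring_nf
    rw [invGammaPdf, prod_gpdf _ _ ht.le, mul_rpow (by positivity) ht.le, hpow, hexp]
    simp only [sub_zero]
    ring
  have hN : 0 ≤ N := Nat.cast_nonneg _
  rw [setIntegral_congr_fun measurableSet_Ioi hpt, integral_const_mul,
    integral_rpow_neg_sub_one_mul_exp_neg_div (by positivity) (by positivity),
    show b + S / 2 = (S + 2 * b) / 2 by ring]
  refine log_injOn_pos (mem_Ioi.2 (by positivity)) (mem_Ioi.2 (by positivity)) ?_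
  simp (disch := positivity) only [log_mul, log_div, log_rpow]
  ring

theorem integral_rpow_mul_exp_neg_div_mul_gaussian {p c A t : ℝ} (hA : 0 < A) (ht : 0 < t)
    (m : ℝ) :
    ∫ w, t ^ (-(p + 1 / 2) - 1) * exp (-c / t) * exp (-(A / (2 * t) * (w - m) ^ 2)) =
      √(2 * π / A) * (t ^ (-p - 1) * exp (-c / t)) := by
  have hpow : t ^ (-(p + 1 / 2) - 1) * √t = t ^ (-p - 1) := by
    rw [sqrt_eq_rpow, ← rpow_add ht]; ring_nf
  rw [integral_const_mul, integral_exp_neg_mul_sub_sq,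
    show π / (A / (2 * t)) = 2 * π / A * t by field_simp, sqrt_mul (by positivity), ← hpow]
  ring

theorem integral_integral_rpow_mul_exp_neg_div_mul_gaussian {q c A : ℝ} (hq : 0 < q)
    (hc : 0 < c) (hA : 0 < A) (m : ℝ) :
    ∫ w, ∫ t in Ioi (0 : ℝ),
        t ^ (-(q + 1 / 2) - 1) * exp (-c / t) * exp (-(A / (2 * t) * (w - m) ^ 2)) =
      √(2 * π / A) * (Gamma q / c ^ q) := by
  set f : ℝ → ℝ → ℝ :=
    fun w t => t ^ (-(q + 1 / 2) - 1) * exp (-c / t) * exp (-(A / (2 * t) * (w - m) ^ 2))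
  have hinner : ∀ t ∈ Ioi (0 : ℝ),
      ∫ w, f w t = √(2 * π / A) * (t ^ (-q - 1) * exp (-c / t)) :=
    fun t ht => integral_rpow_mul_exp_neg_div_mul_gaussian hA ht m
  have hint : Integrable (Function.uncurry f) (volume.prod (volume.restrict (Ioi 0))) := by
    refine (integrable_prod_iff' ?_).2 ⟨?_, ?_⟩
    · exact Measurable.aestronglyMeasurable (by fun_prop)
    · refine (ae_restrict_iff' measurableSet_Ioi).2 (ae_of_all _ fun t (ht : 0 < t) => ?_)
      have := (integrable_exp_neg_mul_sq (by positivity : 0 < A / (2 * t))).comp_sub_right m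
      simpa only [f, Function.uncurry, neg_mul] using
        this.const_mul (t ^ (-(q + 1 / 2) - 1) * exp (-c / t))
    · refine ((integrableOn_rpow_neg_sub_one_mul_exp_neg_div hq hc).const_mul
        √(2 * π / A)).congr
        ((ae_restrict_iff' measurableSet_Ioi).2 (ae_of_all _ fun t (ht : 0 < t) => ?_))
      change √(2 * π / A) * (t ^ (-q - 1) * exp (-c / t)) = ∫ w, ‖f w t‖
      rw [← hinner t ht]
      exact integral_congr_ae (ae_of_all _ fun w => (norm_of_nonneg (by positivity)).symm)
  rw [integral_integral_swap hint, setIntegral_congr_fun measurableSet_Ioi hinner,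
    integral_const_mul, integral_rpow_neg_sub_one_mul_exp_neg_div hq hc]

theorem sum_sub_mul_sq {ι : Type*} (s : Finset ι) (x y : ι → ℝ) (w : ℝ) :
    ∑ i ∈ s, (x i - w * y i) ^ 2 =
      ∑ i ∈ s, x i ^ 2 - 2 * w * ∑ i ∈ s, x i * y i + w ^ 2 * ∑ i ∈ s, y i ^ 2 := by
  rw [mul_sum, mul_sum, ← sum_sub_distrib, ← sum_add_distrib]
  exact sum_congr rfl fun i _ => by ring

theorem integral_integral_gpdf_mul_invGammaPdf_mul_prod_gpdf {ι : Type*} [Fintype ι]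
    {α β η : ℝ} (hα : 0 < α) (hβ : 0 < β) (hη : 0 < η) (x y : ι → ℝ) :
    ∫ w, ∫ t in Ioi (0 : ℝ),
        gpdf 0 (η * t) w * invGammaPdf α β t * ∏ i, gpdf (w * y i) t (x i) =
      Gamma (α + Fintype.card ι / 2) / Gamma α * (2 * β) ^ α /
          (π ^ ((Fintype.card ι : ℝ) / 2) * √η) *
        ((∑ i, y i ^ 2 + 1 / η) ^ (α + Fintype.card ι / 2 - 1 / 2) /
          ((∑ i, x i ^ 2 + 2 * β) * (∑ i, y i ^ 2 + 1 / η) - (∑ i, x i * y i) ^ 2) ^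
            (α + Fintype.card ι / 2)) := by
  set N : ℝ := (Fintype.card ι : ℝ)
  set Sxy := ∑ i, x i * y i
  set A := ∑ i, y i ^ 2 + 1 / η
  set D := (∑ i, x i ^ 2 + 2 * β) * A - Sxy ^ 2
  have hN : 0 ≤ N := Nat.cast_nonneg _
  have hA : 0 < A := by positivity
  have hD : 0 < D := sub_pos.2 <|
    sq_sum_mul_lt_sum_sq_add_mul_sum_sq_add _ x y (by positivity : 0 < 2 * β) (by positivity)
  have hpt : ∀ w, ∀ t ∈ Ioi (0 : ℝ),
      gpdf 0 (η * t) w * invGammaPdf α β t * ∏ i, gpdf (w * y i) t (x i) =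
        β ^ α / Gamma α * (2 * π) ^ (-N / 2) * (2 * π * η) ^ (-(1 : ℝ) / 2) *
          (t ^ (-(α + N / 2 + 1 / 2) - 1) * exp (-(D / (2 * A)) / t) *
            exp (-(A / (2 * t) * (w - Sxy / A) ^ 2))) := by
    intro w t (ht : 0 < t)
    have hpow : t ^ (-(α + N / 2 + 1 / 2) - 1) =
        t ^ (-α - 1) * t ^ (-(1 : ℝ) / 2) * t ^ (-N / 2) := by
      rw [← rpow_add ht, ← rpow_add ht]; ring_nf
    have hsquare : exp (-(w - 0) ^ 2 / (2 * (η * t))) * exp (-β / t) *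
        exp (-(∑ i, (x i - w * y i) ^ 2) / (2 * t)) =
          exp (-(D / (2 * A)) / t) * exp (-(A / (2 * t) * (w - Sxy / A) ^ 2)) := by
      have hηA : η * A = η * ∑ i, y i ^ 2 + 1 := by rw [mul_add, mul_one_div_cancel hη.ne']
      simp only [← exp_add, sum_sub_mul_sq]
      congr 1
      field_simp
      linear_combination (w ^ 2 * A) * hηA
    rw [gpdf_eq_rpow (by positivity), prod_gpdf _ _ ht.le, invGammaPdf,
      ← mul_assoc (2 * π) η t, mul_rpow (x := 2 * π * η) (by positivity) ht.le,
      mul_rpow (x := 2 * π) (by positivity) ht.le, hpow]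
    linear_combination (β ^ α / Gamma α * (2 * π) ^ (-N / 2) *
      (2 * π * η) ^ (-(1 : ℝ) / 2) * (t ^ (-α - 1) * t ^ (-(1 : ℝ) / 2) * t ^ (-N / 2))) * hsquare
  rw [integral_congr_ae (ae_of_all _ fun w => setIntegral_congr_fun measurableSet_Ioi (hpt w))]
  simp only [integral_const_mul]
  rw [integral_integral_rpow_mul_exp_neg_div_mul_gaussian (by positivity) (by positivity) hA]
  refine log_injOn_pos (mem_Ioi.2 (by positivity)) (mem_Ioi.2 (by positivity)) ?_
  simp (disch := positivity) only [log_mul, log_div, log_rpow, log_sqrt]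
  ring

/-- marginal likelihood of graph `G₁` in the non-identifiable
two-node model. -/
theorem stmt_10 (n : ℕ) (X1 X2 : Fin n → ℝ) (α β η : ℝ)
    (hα : 1 / 2 < α) (hβ : 0 < β) (hη : 0 < η) :
    let S1 := ∑ i, X1 i ^ 2
    let S2 := ∑ i, X2 i ^ 2
    let S12 := ∑ i, X1 i * X2 i
    let ν : ℝ := 2 * α + n
    (∫ w : ℝ, ∫ t1 in Set.Ioi (0 : ℝ), ∫ t2 in Set.Ioi (0 : ℝ),
        gpdf 0 (η * t1) w * invGammaPdf α β t1 * invGammaPdf (α - 1 / 2) β t2 *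
          ∏ i, gpdf (w * X2 i) t1 (X1 i) * gpdf 0 t2 (X2 i)) =
      (2 * β) ^ (2 * α - 1 / 2) * Real.Gamma (α + ((n : ℝ) - 1) / 2) *
          Real.Gamma (α + (n : ℝ) / 2) /
          (Real.sqrt η * Real.pi ^ (n : ℝ) * Real.Gamma α * Real.Gamma (α - 1 / 2)) *
        ((S2 + 1 / η) ^ ((ν - 1) / 2) /
          ((S2 + 2 * β) ^ ((ν - 1) / 2) *
            ((S1 + 2 * β) * (S2 + 1 / η) - S12 ^ 2) ^ (ν / 2))) := by
  intro S1 S2 S12 ν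
  have hsplit : ∀ w t1 t2 : ℝ,
      gpdf 0 (η * t1) w * invGammaPdf α β t1 * invGammaPdf (α - 1 / 2) β t2 *
        ∏ i, gpdf (w * X2 i) t1 (X1 i) * gpdf 0 t2 (X2 i) =
      (gpdf 0 (η * t1) w * invGammaPdf α β t1 * ∏ i, gpdf (w * X2 i) t1 (X1 i)) *
        (invGammaPdf (α - 1 / 2) β t2 * ∏ i, gpdf 0 t2 (X2 i)) := by
    intro w t1 t2
    rw [prod_mul_distrib]
    ring
  simp_rw [hsplit, integral_const_mul, integral_mul_const]
  rw [integral_integral_gpdf_mul_invGammaPdf_mul_prod_gpdf (by linarith) hβ hη,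
    integral_invGammaPdf_mul_prod_gpdf_zero (by linarith) hβ, Fintype.card_fin,
    show (2 * β) ^ (2 * α - 1 / 2) = (2 * β) ^ α * (2 * β) ^ (α - 1 / 2) by
      rw [← rpow_add (by positivity)]; ring_nf,
    show π ^ (n : ℝ) = π ^ ((n : ℝ) / 2) * π ^ ((n : ℝ) / 2) by
      rw [← rpow_add pi_pos]; ring_nf,
    show α + ((n : ℝ) - 1) / 2 = α - 1 / 2 + n / 2 by ring,
    show (ν - 1) / 2 = α + n / 2 - 1 / 2 by ring, show ν / 2 = α + n / 2 by ring,
    show α + n / 2 - 1 / 2 = α - 1 / 2 + n / 2 by ring]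
  ring
end
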